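/- arXiv:2406.12290 — 6 statements merged into one kernel-verified Lean document; each statement's English description precedes it below -/
import Mathlib

section
/- For any finite abelian groups G and H, r₃(G) ≥ r₃(G × H) / |H|, where r₃ denotes the maximum size of a subset containing no three distinct elements x, y, z with x + z = 2y. -/
/-- The maximum size of a subset of an abelian group containing no three
distinct elements `x, y, z` with `x + z = y + y`. -/
noncomputable def r3 (G : Type*) [AddCommGroup G] : ℕ :=
  sSup {n : ℕ | ∃ A : Finset G,
    (∀ x ∈ A, ∀ y ∈ A, ∀ z ∈ A, x ≠ y → y ≠ z → x ≠ z → x + z ≠ y + y) ∧ A.card = n}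

theorem stmt_3 (G H : Type*) [AddCommGroup G] [AddCommGroup H] [Fintype G] [Fintype H] :
    (r3 G : ℝ) ≥ (r3 (G × H) : ℝ) / (Fintype.card H : ℝ) := by
  classical
  have hSne : ({n : ℕ | ∃ A : Finset (G × H),
      (∀ x ∈ A, ∀ y ∈ A, ∀ z ∈ A, x ≠ y → y ≠ z → x ≠ z → x + z ≠ y + y) ∧ A.card = n}).Nonempty :=
    ⟨0, ∅, by simp, rfl⟩
  have hSbdd : BddAbove {n : ℕ | ∃ A : Finset (G × H),
      (∀ x ∈ A, ∀ y ∈ A, ∀ z ∈ A, x ≠ y → y ≠ z → x ≠ z → x + z ≠ y + y) ∧ A.card = n} :=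
    ⟨Fintype.card (G × H), by rintro n ⟨A, -, rfl⟩; exact Finset.card_le_univ A⟩
  have hmem : r3 (G × H) ∈ {n : ℕ | ∃ A : Finset (G × H),
      (∀ x ∈ A, ∀ y ∈ A, ∀ z ∈ A, x ≠ y → y ≠ z → x ≠ z → x + z ≠ y + y) ∧ A.card = n} :=
    Nat.sSup_mem hSne hSbdd
  obtain ⟨A, hA, hAcard⟩ := hmem
  -- fiber decomposition
  set f : H → ℕ := fun h => (A.filter (fun p => p.2 = h)).card with hf
  have hsum : ∑ h : H, f h = A.card :=
    (Finset.card_eq_sum_card_fiberwise (f := Prod.snd) (fun p _ => Finset.mem_univ p.2)).symm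
  obtain ⟨h0, -, hmax⟩ := Finset.exists_max_image Finset.univ f ⟨(0 : H), Finset.mem_univ 0⟩
  have hsumle : A.card ≤ Fintype.card H * f h0 := by
    rw [← hsum]
    calc ∑ h : H, f h ≤ ∑ _h : H, f h0 :=
          Finset.sum_le_sum (fun h _ => hmax h (Finset.mem_univ h))
      _ = Fintype.card H * f h0 := by rw [Finset.sum_const, smul_eq_mul, Finset.card_univ]
  -- project the fiber over h0 to G
  set B : Finset (G × H) := A.filter (fun p => p.2 = h0) with hB
  set C : Finset G := B.image Prod.fst with hC
  have hmemC : ∀ g ∈ C, (g, h0) ∈ A := by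
    intro g hg
    obtain ⟨p, hp, hpg⟩ := Finset.mem_image.mp hg
    have := Finset.mem_filter.mp hp
    have : p = (g, h0) := Prod.ext hpg this.2
    exact this ▸ (Finset.mem_filter.mp hp).1
  have hCcard : C.card = f h0 := by
    rw [hC]
    apply Finset.card_image_of_injOn
    intro p hp q hq hpq
    exact Prod.ext hpq (((Finset.mem_filter.mp hp).2).trans ((Finset.mem_filter.mp hq).2).symm)
  have hCfree : ∀ x ∈ C, ∀ y ∈ C, ∀ z ∈ C, x ≠ y → y ≠ z → x ≠ z → x + z ≠ y + y := by
    intro x hx y hy z hz hxy hyz hxz heq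
    refine hA (x, h0) (hmemC x hx) (y, h0) (hmemC y hy) (z, h0) (hmemC z hz)
      (by simp [Prod.ext_iff, hxy]) (by simp [Prod.ext_iff, hyz]) (by simp [Prod.ext_iff, hxz]) ?_
    simp [Prod.ext_iff, heq]
  -- conclude r3 G ≥ C.card
  have hGbdd : BddAbove {n : ℕ | ∃ A : Finset G,
      (∀ x ∈ A, ∀ y ∈ A, ∀ z ∈ A, x ≠ y → y ≠ z → x ≠ z → x + z ≠ y + y) ∧ A.card = n} :=
    ⟨Fintype.card G, by rintro n ⟨A, -, rfl⟩; exact Finset.card_le_univ A⟩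
  have hle : C.card ≤ r3 G := le_csSup hGbdd ⟨C, hCfree, rfl⟩
  have key : r3 (G × H) ≤ Fintype.card H * r3 G := by
    calc r3 (G × H) = A.card := hAcard.symm
      _ ≤ Fintype.card H * f h0 := hsumle
      _ = Fintype.card H * C.card := by rw [hCcard]
      _ ≤ Fintype.card H * r3 G := Nat.mul_le_mul_left _ hle
  have hHpos : (0 : ℝ) < Fintype.card H := by
    exact_mod_cast Fintype.card_pos
  rw [ge_iff_le, div_le_iff₀ hHpos]
  have := (Nat.cast_le (α := ℝ)).mpr key
  push_cast at this
  linarith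
end

section
/- Let 0 < ε < 1 and let T = T₁ ∪ T₂ ∪ T₃ be as in the paper's Definition. Then for all (a,b), (a',b') ∈ T with a + a' < 1, we have a + b + a' + b' > 11/6. -/
open Set MeasureTheory

def T1 : Set (ℝ × ℝ) :=
  {p | p.1 ∈ Ico (1/2 : ℝ) 1 ∧ p.2 ∈ Ico (0 : ℝ) 1 ∧ 2/3 < p.1 + p.2 ∧ p.1 + p.2 ≤ 7/6}

def T2 (ε : ℝ) : Set (ℝ × ℝ) :=
  {p | p.1 ∈ Ico (1/2 : ℝ) 1 ∧ p.2 ∈ Ico (0 : ℝ) (1/2) ∧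
    7/6 + ε ≤ p.1 + p.2 ∧ p.1 + p.2 ≤ 17/12}

def T3 (ε : ℝ) : Set (ℝ × ℝ) :=
  {p | p.1 ∈ Ico (0 : ℝ) (1/2) ∧ p.2 ∈ Ico (1/2 : ℝ) 1 ∧
    7/6 + ε ≤ p.1 + p.2 ∧ p.1 + p.2 ≤ 17/12 ∧ 3/2 + ε ≤ 2 * p.1 + p.2}

def T (ε : ℝ) : Set (ℝ × ℝ) := T1 ∪ T2 ε ∪ T3 ε

lemma mem_T_sum_gt {ε : ℝ} (hε : 0 < ε) {p : ℝ × ℝ} (hp : p ∈ T ε) :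
    2/3 < p.1 + p.2 := by
  rcases hp with (h | h) | h
  · exact h.2.2.1
  · linarith [h.2.2.1]
  · linarith [h.2.2.1]

theorem stmt_11 (ε : ℝ) (hε : 0 < ε) (hε1 : ε < 1) (p q : ℝ × ℝ)
    (hp : p ∈ T ε) (hq : q ∈ T ε) (h : p.1 + q.1 < 1) :
    p.1 + p.2 + q.1 + q.2 > 11/6 := by
  have key : p ∈ T3 ε ∨ q ∈ T3 ε := by
    by_contra hc
    push_neg at hc
    have hp1 : (1:ℝ)/2 ≤ p.1 := by
      rcases hp with (h1 | h1) | h1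
      · exact h1.1.1
      · exact h1.1.1
      · exact absurd h1 hc.1
    have hq1 : (1:ℝ)/2 ≤ q.1 := by
      rcases hq with (h1 | h1) | h1
      · exact h1.1.1
      · exact h1.1.1
      · exact absurd h1 hc.2
    linarith
  rcases key with hk | hk
  · have := mem_T_sum_gt hε hq
    have := hk.2.2.1
    linarith
  · have := mem_T_sum_gt hε hp
    have := hk.2.2.1
    linarith
end

section
/- Let 0 < ε < 1 and let T = T₁ ∪ T₂ ∪ T₃ be as in the paper's Definition. Let x, y, z ∈ T satisfy x + z ≡ 2y (mod 1) coordinatewise. Then either y₁ + y₂ = (x₁+x₂)/2 + (z₁+z₂)/2 or y₁ + y₂ = (x₁+x₂)/2 + (z₁+z₂)/2 - 1/2. -/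
open Set MeasureTheory

set_option maxHeartbeats 2000000 in
theorem stmt_13 (ε : ℝ) (hε : 0 < ε) (hε1 : ε < 1) (x y z : ℝ × ℝ)
    (hx : x ∈ T ε) (hy : y ∈ T ε) (hz : z ∈ T ε)
    (h1 : ∃ k : ℤ, x.1 + z.1 - 2 * y.1 = k) (h2 : ∃ k : ℤ, x.2 + z.2 - 2 * y.2 = k) :
    y.1 + y.2 = (x.1 + x.2)/2 + (z.1 + z.2)/2 ∨
      y.1 + y.2 = (x.1 + x.2)/2 + (z.1 + z.2)/2 - 1/2 := by
  obtain ⟨k1, hk1⟩ := h1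
  obtain ⟨k2, hk2⟩ := h2
  simp only [T, T1, T2, T3, Set.mem_union, Set.mem_setOf_eq, Set.mem_Ico] at hx hy hz
  have bx : 0 ≤ x.1 ∧ x.1 < 1 ∧ 0 ≤ x.2 ∧ x.2 < 1 := by
    rcases hx with (h | h) | h <;>
      exact ⟨by linarith [h.1.1], by linarith [h.1.2], by linarith [h.2.1.1], by linarith [h.2.1.2]⟩
  have hby : 0 ≤ y.1 ∧ y.1 < 1 ∧ 0 ≤ y.2 ∧ y.2 < 1 := by
    rcases hy with (h | h) | h <;>
      exact ⟨by linarith [h.1.1], by linarith [h.1.2], by linarith [h.2.1.1], by linarith [h.2.1.2]⟩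
  have bz : 0 ≤ z.1 ∧ z.1 < 1 ∧ 0 ≤ z.2 ∧ z.2 < 1 := by
    rcases hz with (h | h) | h <;>
      exact ⟨by linarith [h.1.1], by linarith [h.1.2], by linarith [h.2.1.1], by linarith [h.2.1.2]⟩
  obtain ⟨bx1, bx2, bx3, bx4⟩ := bx
  obtain ⟨by1, by2, by3, by4⟩ := hby
  obtain ⟨bz1, bz2, bz3, bz4⟩ := bz
  have hk1b : -1 ≤ k1 ∧ k1 ≤ 1 := by
    have ha : (-2 : ℤ) < k1 := by exact_mod_cast (show (-2 : ℝ) < (k1 : ℝ) by linarith)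
    have hb : k1 < 2 := by exact_mod_cast (show ((k1 : ℝ)) < 2 by linarith)
    omega
  have hk2b : -1 ≤ k2 ∧ k2 ≤ 1 := by
    have ha : (-2 : ℤ) < k2 := by exact_mod_cast (show (-2 : ℝ) < (k2 : ℝ) by linarith)
    have hb : k2 < 2 := by exact_mod_cast (show ((k2 : ℝ)) < 2 by linarith)
    omega
  obtain ⟨hk1l, hk1u⟩ := hk1b
  obtain ⟨hk2l, hk2u⟩ := hk2b
  interval_cases k1 <;> interval_cases k2 <;> push_cast at hk1 hk2 <;>
    first
    | (left; linarith)
    | (right; linarith)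
    | (exfalso
       rcases hx with (⟨⟨a1, a2⟩, ⟨a3, a4⟩, a5, a6⟩ | ⟨⟨a1, a2⟩, ⟨a3, a4⟩, a5, a6⟩) |
         ⟨⟨a1, a2⟩, ⟨a3, a4⟩, a5, a6, a7⟩ <;>
       rcases hy with (⟨⟨b1, b2⟩, ⟨b3, b4⟩, b5, b6⟩ | ⟨⟨b1, b2⟩, ⟨b3, b4⟩, b5, b6⟩) |
         ⟨⟨b1, b2⟩, ⟨b3, b4⟩, b5, b6, b7⟩ <;>
       rcases hz with (⟨⟨c1, c2⟩, ⟨c3, c4⟩, c5, c6⟩ | ⟨⟨c1, c2⟩, ⟨c3, c4⟩, c5, c6⟩) |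
         ⟨⟨c1, c2⟩, ⟨c3, c4⟩, c5, c6, c7⟩ <;>
       linarith)
end

section
/- Let 0 < ε < 1 and let T = T₁ ∪ T₂ ∪ T₃ be as in the paper's Definition. Let x, y, z ∈ T satisfy x + z ≡ 2y (mod 1) coordinatewise. Then at least one of the following holds: (a) (x₁+x₂)² + (z₁+z₂)² ≥ 2(y₁+y₂)² + ε²/2; (b) |x₁+x₂-z₁-z₂| < ε and (x₁+x₂)² + (z₁+z₂)² = 2(y₁+y₂)² + (x₁+x₂-z₁-z₂)²/2. -/
open Set MeasureTheory

lemma T_facts {ε : ℝ} (hε : 0 < ε) {p : ℝ × ℝ} (hp : p ∈ T ε) :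
    0 ≤ p.1 ∧ p.1 < 1 ∧ 0 ≤ p.2 ∧ p.2 < 1 ∧ 2/3 < p.1 + p.2 ∧ p.1 + p.2 ≤ 17/12 ∧
      (p.1 < 1/2 → 7/6 + ε ≤ p.1 + p.2) ∧
      (1/2 ≤ p.2 → 7/6 < p.1 + p.2 → p.1 < 1/2) := by
  rcases hp with (⟨⟨h1,h2⟩,⟨h3,h4⟩,h5,h6⟩|⟨⟨h1,h2⟩,⟨h3,h4⟩,h5,h6⟩)|⟨⟨h1,h2⟩,⟨h3,h4⟩,h5,h6,h7⟩ <;>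
    exact ⟨by linarith, by linarith, by linarith, by linarith, by linarith, by linarith,
      fun h => by linarith, fun ha hb => by linarith⟩

lemma key {ε : ℝ} (hε : 0 < ε) {x y z : ℝ × ℝ}
    (hx : x ∈ T ε) (hy : y ∈ T ε) (hz : z ∈ T ε)
    (h : x.1 + z.1 < 1)
    (hsum : x.1 + x.2 + (z.1 + z.2) = 2 * (y.1 + y.2) - 1) : False := by
  obtain ⟨hx1,hx2,hx3,hx4,hx5,hx6,hx7,hx8⟩ := T_facts hε hx
  obtain ⟨hy1,hy2,hy3,hy4,hy5,hy6,hy7,hy8⟩ := T_facts hε hy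
  obtain ⟨hz1,hz2,hz3,hz4,hz5,hz6,hz7,hz8⟩ := T_facts hε hz
  rcases lt_or_ge x.1 (1/2) with h1 | h1
  · have := hx7 h1; linarith
  · have hz' : z.1 < 1/2 := by linarith
    have := hz7 hz'; linarith

theorem stmt_14 (ε : ℝ) (hε : 0 < ε) (hε1 : ε < 1) (x y z : ℝ × ℝ)
    (hx : x ∈ T ε) (hy : y ∈ T ε) (hz : z ∈ T ε)
    (h1 : ∃ k : ℤ, x.1 + z.1 - 2 * y.1 = k) (h2 : ∃ k : ℤ, x.2 + z.2 - 2 * y.2 = k) :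
    (x.1 + x.2)^2 + (z.1 + z.2)^2 ≥ 2 * (y.1 + y.2)^2 + ε^2/2 ∨
      (|x.1 + x.2 - z.1 - z.2| < ε ∧
        (x.1 + x.2)^2 + (z.1 + z.2)^2
          = 2 * (y.1 + y.2)^2 + (x.1 + x.2 - z.1 - z.2)^2 / 2) := by
  obtain ⟨k₁, hk1⟩ := h1
  obtain ⟨k₂, hk2⟩ := h2
  obtain ⟨hx1,hx2,hx3,hx4,hx5,hx6,hx7,hx8⟩ := T_facts hε hx
  obtain ⟨hy1,hy2,hy3,hy4,hy5,hy6,hy7,hy8⟩ := T_facts hε hy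
  obtain ⟨hz1,hz2,hz3,hz4,hz5,hz6,hz7,hz8⟩ := T_facts hε hz
  have h1c : k₁ < 2 := by exact_mod_cast show (k₁:ℝ) < 2 by rw [← hk1]; linarith
  have h1d : -2 < k₁ := by exact_mod_cast show (-2:ℝ) < (k₁:ℝ) by rw [← hk1]; linarith
  have h2c : k₂ < 2 := by exact_mod_cast show (k₂:ℝ) < 2 by rw [← hk2]; linarith
  have h2d : -2 < k₂ := by exact_mod_cast show (-2:ℝ) < (k₂:ℝ) by rw [← hk2]; linarith
  have hs1 : k₁ + k₂ < 2 := by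
    exact_mod_cast show ((k₁ + k₂ : ℤ):ℝ) < 2 by push_cast; linarith
  have hs2 : -2 < k₁ + k₂ := by
    exact_mod_cast show (-2:ℝ) < ((k₁ + k₂ : ℤ):ℝ) by push_cast; linarith
  have hcases : k₁ + k₂ = -1 ∨ k₁ + k₂ = 0 ∨ k₁ + k₂ = 1 := by omega
  rcases hcases with hm | hm | hm
  · -- total shift -1 : impossible
    exfalso
    have hsub : (k₁ = -1 ∧ k₂ = 0) ∨ (k₁ = 0 ∧ k₂ = -1) := by omega
    rcases hsub with ⟨ha, hb⟩ | ⟨ha, hb⟩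
    · rw [ha] at hk1; rw [hb] at hk2
      push_cast at hk1 hk2
      exact key hε hx hy hz (by linarith) (by linarith)
    · rw [ha] at hk1; rw [hb] at hk2
      push_cast at hk1 hk2
      -- x₂+z₂ = 2y₂-1 ≥ 0 forces y₂ ≥ 1/2, and y₁+y₂ > 7/6, so y₁ < 1/2
      have hy' : y.1 < 1/2 := hy8 (by linarith) (by linarith)
      exact key hε hx hy hz (by linarith) (by linarith)
  · -- total shift 0
    have hm' : ((k₁ + k₂ : ℤ):ℝ) = 0 := by exact_mod_cast congrArg (Int.cast : ℤ → ℝ) hm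
    push_cast at hm'
    have e : (x.1 + x.2) + (z.1 + z.2) = 2 * (y.1 + y.2) := by linarith
    rcases lt_or_ge |x.1 + x.2 - z.1 - z.2| ε with hlt | hge
    · right
      refine ⟨hlt, ?_⟩
      linear_combination ((x.1 + x.2 + (z.1 + z.2) + 2 * (y.1 + y.2))/2) * e
    · left
      have habs : ε^2 ≤ |x.1 + x.2 - z.1 - z.2|^2 := pow_le_pow_left₀ hε.le hge 2
      rw [sq_abs] at habs
      have eq2 : (x.1 + x.2)^2 + (z.1 + z.2)^2
          = 2 * (y.1 + y.2)^2 + (x.1 + x.2 - z.1 - z.2)^2 / 2 := by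
        linear_combination ((x.1 + x.2 + (z.1 + z.2) + 2 * (y.1 + y.2))/2) * e
      linarith [habs, eq2]
  · -- total shift 1
    left
    have hm' : ((k₁ + k₂ : ℤ):ℝ) = 1 := by exact_mod_cast congrArg (Int.cast : ℤ → ℝ) hm
    push_cast at hm'
    have e : (x.1 + x.2) + (z.1 + z.2) = 2 * (y.1 + y.2) + 1 := by linarith
    have hε2 : ε^2 < 1 := by nlinarith
    have eq3 : (x.1 + x.2)^2 + (z.1 + z.2)^2
        = 2 * (y.1 + y.2)^2 + (x.1 + x.2 - z.1 - z.2)^2 / 2 + 2 * (y.1 + y.2) + 1/2 := by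
      linear_combination ((x.1 + x.2 + (z.1 + z.2) + 2 * (y.1 + y.2) + 1)/2) * e
    linarith [eq3, sq_nonneg (x.1 + x.2 - z.1 - z.2), hε2, hy5]
end

section
/- Let 0 < ε < 1 and let T = T₁ ∪ T₂ ∪ T₃ be as in the paper's Definition. Suppose x, z ∈ T satisfy |x₁+x₂-z₁-z₂| < ε, and that x₁ ≥ 1/2 or z₁ ≥ 1/2. Then x₁ + z₁ ≥ 1. -/
open Set MeasureTheory

lemma stmt_15_aux (ε : ℝ) (hε : 0 < ε) (x z : ℝ × ℝ)
    (hx : x ∈ T ε) (hz : z ∈ T ε)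
    (h1 : z.1 + z.2 < x.1 + x.2 + ε) (h2 : x.1 + x.2 < z.1 + z.2 + ε)
    (hx1 : 1/2 ≤ x.1) : x.1 + z.1 ≥ 1 := by
  by_cases hz1 : (1:ℝ)/2 ≤ z.1
  · linarith
  · push_neg at hz1
    have hz3 : z ∈ T3 ε := by
      rcases hz with (hz | hz) | hz
      · exact absurd hz.1.1 (by linarith)
      · exact absurd hz.1.1 (by linarith)
      · exact hz
    obtain ⟨_, _, hzsum, _, hz2a⟩ := hz3
    rcases hx with (hx | hx) | hx
    · obtain ⟨_, _, _, hxle⟩ := hx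
      linarith
    · obtain ⟨_, ⟨_, hx2⟩, _, _⟩ := hx
      linarith
    · obtain ⟨⟨_, hlt⟩, _⟩ := hx
      linarith

theorem stmt_15 (ε : ℝ) (hε : 0 < ε) (hε1 : ε < 1) (x z : ℝ × ℝ)
    (hx : x ∈ T ε) (hz : z ∈ T ε)
    (h : |x.1 + x.2 - z.1 - z.2| < ε) (h' : 1/2 ≤ x.1 ∨ 1/2 ≤ z.1) :
    x.1 + z.1 ≥ 1 := by
  rcases abs_lt.mp h with ⟨h1, h2⟩
  rcases h' with h' | h'
  · exact stmt_15_aux ε hε x z hx hz (by linarith) (by linarith) h'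
  · have := stmt_15_aux ε hε z x hz hx (by linarith) (by linarith) h'
    linarith
end

section
/- Let 0 < ε < 1 and let T = T₁ ∪ T₂ ∪ T₃ be as in the paper's Definition, and let g(t) = t² for t ∈ [0,1/2), g(t) = (t-1/2)² for t ∈ [1/2,1). If x, y, z ∈ T satisfy x + z ≡ 2y (mod 1) coordinatewise and |x₁+x₂-z₁-z₂| < ε, then g(x₁) + g(z₁) ≥ 2·g(y₁) + (x₁-z₁)²/2. -/
open Set MeasureTheory

noncomputable def g (t : ℝ) : ℝ := if t < 1/2 then t^2 else (t - 1/2)^2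

-- both first coordinates in [1/2, 1)
lemma gHigh (a c y : ℝ) (k : ℤ) (hk : a + c - 2*y = k)
    (ha : 1/2 ≤ a) (ha1 : a < 1) (hc : 1/2 ≤ c) (hc1 : c < 1)
    (hy0 : 0 ≤ y) (hy1 : y < 1) : g a + g c ≥ 2 * g y + (a-c)^2/2 := by
  have hkl : (-1:ℤ) < k := by exact_mod_cast show (-1:ℝ) < (k:ℝ) by rw [← hk]; linarith
  have hku : k < 2 := by exact_mod_cast show (k:ℝ) < (2:ℝ) by rw [← hk]; linarith
  interval_cases k <;> push_cast at hk <;>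
    simp only [g, if_neg (show ¬ a < 1/2 by linarith), if_neg (show ¬ c < 1/2 by linarith)]
  · rw [if_neg (show ¬ y < 1/2 by linarith)]; nlinarith
  · rw [if_pos (show y < 1/2 by linarith)]; nlinarith

-- both first coordinates in [0, 1/2)
lemma gLow (a c y : ℝ) (k : ℤ) (hk : a + c - 2*y = k)
    (ha : 0 ≤ a) (ha1 : a < 1/2) (hc : 0 ≤ c) (hc1 : c < 1/2)
    (hy0 : 0 ≤ y) (hy1 : y < 1) : g a + g c ≥ 2 * g y + (a-c)^2/2 := by
  have hkl : (-2:ℤ) < k := by exact_mod_cast show (-2:ℝ) < (k:ℝ) by rw [← hk]; linarith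
  have hku : k < 1 := by exact_mod_cast show (k:ℝ) < (1:ℝ) by rw [← hk]; linarith
  interval_cases k <;> push_cast at hk <;>
    simp only [g, if_pos (show a < 1/2 from ha1), if_pos (show c < 1/2 from hc1)]
  · rw [if_neg (show ¬ y < 1/2 by linarith)]; nlinarith
  · rw [if_pos (show y < 1/2 by linarith)]; nlinarith

-- mixed case: a ∈ [1/2,1), c ∈ [1/4, 1/2), a + c > 1
lemma gMix (a c y : ℝ) (k : ℤ) (hk : a + c - 2*y = k)
    (ha : 1/2 ≤ a) (ha1 : a < 1) (hc : 1/4 ≤ c) (hc1 : c < 1/2) (hac : 1 < a + c)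
    (hy0 : 0 ≤ y) (hy1 : y < 1) : g a + g c ≥ 2 * g y + (a-c)^2/2 := by
  have hkl : (-1:ℤ) < k := by exact_mod_cast show (-1:ℝ) < (k:ℝ) by rw [← hk]; linarith
  have hku : k < 2 := by exact_mod_cast show (k:ℝ) < (2:ℝ) by rw [← hk]; linarith
  interval_cases k <;> push_cast at hk <;>
    simp only [g, if_neg (show ¬ a < 1/2 by linarith), if_pos (show c < 1/2 from hc1)]
  · rw [if_neg (show ¬ y < 1/2 by linarith)]; nlinarith
  · rw [if_pos (show y < 1/2 by linarith)]; nlinarith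

theorem stmt_16 (ε : ℝ) (hε : 0 < ε) (hε1 : ε < 1) (x y z : ℝ × ℝ)
    (hx : x ∈ T ε) (hy : y ∈ T ε) (hz : z ∈ T ε)
    (h1 : ∃ k : ℤ, x.1 + z.1 - 2 * y.1 = k) (h2 : ∃ k : ℤ, x.2 + z.2 - 2 * y.2 = k)
    (h : |x.1 + x.2 - z.1 - z.2| < ε) :
    g x.1 + g z.1 ≥ 2 * g y.1 + (x.1 - z.1)^2 / 2 := by
  obtain ⟨k, hk⟩ := h1
  rw [abs_lt] at h
  have hy0 : 0 ≤ y.1 ∧ y.1 < 1 := by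
    rcases hy with (⟨⟨h1, h2⟩, -⟩ | ⟨⟨h1, h2⟩, -⟩) | ⟨⟨h1, h2⟩, -⟩ <;>
      exact ⟨by linarith, by linarith⟩
  rcases hx with (hx | hx) | hx <;> rcases hz with (hz | hz) | hz
  · -- T1 / T1
    obtain ⟨⟨ha, ha1⟩, -, -, -⟩ := hx
    obtain ⟨⟨hc, hc1⟩, -, -, -⟩ := hz
    exact gHigh _ _ _ k hk ha ha1 hc hc1 hy0.1 hy0.2
  · -- T1 / T2 : impossible
    exact absurd h.2 (by obtain ⟨-, -, -, hs⟩ := hx; obtain ⟨-, -, hs', -⟩ := hz; push_neg; linarith)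
  · -- T1 / T3 : impossible
    exact absurd h.2 (by obtain ⟨-, -, -, hs⟩ := hx; obtain ⟨-, -, hs', -⟩ := hz; push_neg; linarith)
  · -- T2 / T1 : impossible
    exact absurd h.1 (by obtain ⟨-, -, hs, -⟩ := hx; obtain ⟨-, -, -, hs'⟩ := hz; push_neg; linarith)
  · -- T2 / T2
    obtain ⟨⟨ha, ha1⟩, -, -, -⟩ := hx
    obtain ⟨⟨hc, hc1⟩, -, -, -⟩ := hz
    exact gHigh _ _ _ k hk ha ha1 hc hc1 hy0.1 hy0.2
  · -- T2 / T3 : mixed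
    obtain ⟨⟨ha, ha1⟩, ⟨hb, hb1⟩, hs1, hs1'⟩ := hx
    obtain ⟨⟨hc, hc1⟩, ⟨hd, hd1⟩, hs2, hs2', hslope⟩ := hz
    exact gMix _ _ _ k hk ha ha1 (by linarith) hc1 (by linarith) hy0.1 hy0.2
  · -- T3 / T1 : impossible
    exact absurd h.1 (by obtain ⟨-, -, hs, -⟩ := hx; obtain ⟨-, -, -, hs'⟩ := hz; push_neg; linarith)
  · -- T3 / T2 : mixed (swapped)
    obtain ⟨⟨hc, hc1⟩, ⟨hd, hd1⟩, hs2, hs2', hslope⟩ := hx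
    obtain ⟨⟨ha, ha1⟩, ⟨hb, hb1⟩, hs1, hs1'⟩ := hz
    have := gMix z.1 x.1 y.1 k (by linarith) ha ha1 (by linarith) hc1 (by linarith)
      hy0.1 hy0.2
    nlinarith [this]
  · -- T3 / T3
    obtain ⟨⟨ha, ha1⟩, -, -, -⟩ := hx
    obtain ⟨⟨hc, hc1⟩, -, -, -⟩ := hz
    exact gLow _ _ _ k hk ha ha1 hc hc1 hy0.1 hy0.2
end
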